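/- Let c_1, …, c_n ∈ ℂ be pairwise distinct points with |c_k| < R for all k. The curves z_k(t) = c_k e^{−it/2} (k = 1,…,n) form a solution of the curved n-body problem in the Poincaré disk if and only if the points c_1, …, c_n satisfy the elliptic relative-equilibrium equations. -/

import Mathlib

open Complex ComplexConjugate Finset

/-- The quantity `Θ_{2,(k,j)}` appearing in the denominators of the equations of
motion of the curved `n`-body problem in the Poincaré disk of radius `R`. -/
noncomputable def diskTheta (R : ℝ) (z w : ℂ) : ℝ :=
  ((2 * (z * conj w + w * conj z) * (R : ℂ) ^ 2
      - ((((‖z‖) ^ 2 + R ^ 2) * ((‖w‖) ^ 2 + R ^ 2) : ℝ) : ℂ)) ^ 2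
    - (((R ^ 2 - (‖z‖) ^ 2) ^ 2 * (R ^ 2 - (‖w‖) ^ 2) ^ 2 : ℝ) : ℂ)).re

/-- The curves `z k` form a solution of the curved `n`-body problem in the
Poincaré disk of radius `R` with masses `m`. -/
def IsDiskSolution (R : ℝ) {n : ℕ} (m : Fin n → ℝ) (z : Fin n → ℝ → ℂ) : Prop :=
  ∀ (k : Fin n) (t : ℝ),
    deriv (deriv (z k)) t
      = -2 * conj (z k t) * (deriv (z k) t) ^ 2
          / ((R : ℂ) ^ 2 - (((‖(z k t)‖) ^ 2 : ℝ) : ℂ))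
        + (((R ^ 2 - (‖(z k t)‖) ^ 2) ^ 2 / R ^ 4 : ℝ) : ℂ) *
          ∑ j ∈ Finset.univ.erase k,
            (m j : ℂ) * (R : ℂ) * ((R : ℂ) ^ 2 - (((‖(z k t)‖) ^ 2 : ℝ) : ℂ))
              * ((((R ^ 2 - (‖(z j t)‖) ^ 2) ^ 2 : ℝ)) : ℂ)
              * (z j t - z k t) * ((R : ℂ) ^ 2 - z k t * conj (z j t))
              / (((diskTheta R (z k t) (z j t)) ^ ((3 : ℝ) / 2) : ℝ) : ℂ)

/-- The points `c k` satisfy the elliptic relative-equilibrium equations in the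
Poincaré disk of radius `R` with masses `m`. -/
def EllipticRelEq (R : ℝ) {n : ℕ} (m : Fin n → ℝ) (c : Fin n → ℂ) : Prop :=
  ∀ k : Fin n,
    (R : ℂ) ^ 3 * (((R ^ 2 + (‖(c k)‖) ^ 2 : ℝ)) : ℂ) * c k
        / (((4 * (R ^ 2 - (‖(c k)‖) ^ 2) ^ 4 : ℝ)) : ℂ)
      = -∑ j ∈ Finset.univ.erase k,
          (m j : ℂ) * ((((‖(c j)‖) ^ 2 - R ^ 2) ^ 2 : ℝ) : ℂ)
            * (c j - c k) * ((R : ℂ) ^ 2 - c k * conj (c j))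
            / (((diskTheta R (c k) (c j)) ^ ((3 : ℝ) / 2) : ℝ) : ℂ)

/-!
For `z_k = c_k u(t)` with `u = e^{-it/2}` on the unit circle, the norms `|z_k|`, the products
`z_k z̄_j` and hence `Θ_{kj}` do not depend on `t`, the interaction sum rotates with `u`, and
`z̈_k = -z_k / 4`, `z̄_k ż_k² = -|c_k|² c_k u / 4`. So the difference of the two sides of the
equation of motion of particle `k` at time `t` is `-u (R² - |c_k|²)³ / R³` times the difference of
the two sides of the `k`-th relative-equilibrium equation, and that factor never vanishes.
-/

noncomputable def diskForce (R : ℝ) {n : ℕ} (m : Fin n → ℝ) (w : Fin n → ℂ) (k : Fin n) : ℂ :=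
  ∑ j ∈ Finset.univ.erase k,
    (m j : ℂ) * ((((‖(w j)‖) ^ 2 - R ^ 2) ^ 2 : ℝ) : ℂ)
      * (w j - w k) * ((R : ℂ) ^ 2 - w k * conj (w j))
      / (((diskTheta R (w k) (w j)) ^ ((3 : ℝ) / 2) : ℝ) : ℂ)

section Reformulation

variable {R : ℝ} {n : ℕ} {m : Fin n → ℝ}

theorem sum_eq_mul_diskForce (w : Fin n → ℂ) (k : Fin n) :
    ∑ j ∈ Finset.univ.erase k,
        (m j : ℂ) * (R : ℂ) * ((R : ℂ) ^ 2 - (((‖(w k)‖) ^ 2 : ℝ) : ℂ))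
          * ((((R ^ 2 - (‖(w j)‖) ^ 2) ^ 2 : ℝ)) : ℂ)
          * (w j - w k) * ((R : ℂ) ^ 2 - w k * conj (w j))
          / (((diskTheta R (w k) (w j)) ^ ((3 : ℝ) / 2) : ℝ) : ℂ)
      = (R : ℂ) * ((R : ℂ) ^ 2 - (((‖(w k)‖) ^ 2 : ℝ) : ℂ)) * diskForce R m w k := by
  rw [diskForce, Finset.mul_sum]
  refine Finset.sum_congr rfl fun j _ => ?_
  push_cast
  ring

theorem isDiskSolution_iff_diskForce {z : Fin n → ℝ → ℂ} :
    IsDiskSolution R m z ↔ ∀ k t,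
      deriv (deriv (z k)) t
        = -2 * conj (z k t) * (deriv (z k) t) ^ 2
            / ((R : ℂ) ^ 2 - (((‖(z k t)‖) ^ 2 : ℝ) : ℂ))
          + (((R ^ 2 - (‖(z k t)‖) ^ 2) ^ 2 / R ^ 4 : ℝ) : ℂ) *
            ((R : ℂ) * ((R : ℂ) ^ 2 - (((‖(z k t)‖) ^ 2 : ℝ) : ℂ))
              * diskForce R m (fun j => z j t) k) := by
  refine forall₂_congr fun k t => ?_
  rw [← sum_eq_mul_diskForce (fun j => z j t)]

theorem ellipticRelEq_iff_diskForce {c : Fin n → ℂ} :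
    EllipticRelEq R m c ↔ ∀ k,
      (R : ℂ) ^ 3 * (((R ^ 2 + (‖(c k)‖) ^ 2 : ℝ)) : ℂ) * c k
          / (((4 * (R ^ 2 - (‖(c k)‖) ^ 2) ^ 4 : ℝ)) : ℂ) = -diskForce R m c k :=
  Iff.rfl

end Reformulation

section Rotation

variable {u : ℂ}

theorem conj_mul_self_of_norm_eq_one (hu : ‖u‖ = 1) : conj u * u = 1 := by
  rw [Complex.conj_mul', hu]
  norm_num

theorem mul_conj_mul_unit (hu : ‖u‖ = 1) (z w : ℂ) : z * u * conj (w * u) = z * conj w := by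
  rw [map_mul]
  linear_combination z * conj w * conj_mul_self_of_norm_eq_one hu

theorem diskTheta_mul_unit (hu : ‖u‖ = 1) (R : ℝ) (z w : ℂ) :
    diskTheta R (z * u) (w * u) = diskTheta R z w := by
  simp only [diskTheta, norm_mul, hu, mul_one, mul_conj_mul_unit hu]

theorem diskForce_mul_unit (hu : ‖u‖ = 1) (R : ℝ) {n : ℕ} (m : Fin n → ℝ) (w : Fin n → ℂ)
    (k : Fin n) : diskForce R m (fun j => w j * u) k = u * diskForce R m w k := by
  rw [diskForce, diskForce, Finset.mul_sum]
  refine Finset.sum_congr rfl fun j _ => ?_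
  simp only [diskTheta_mul_unit hu, norm_mul, hu, mul_one]
  rw [← mul_conj_mul_unit hu (w k) (w j)]
  ring

end Rotation

theorem deriv_const_mul_cexp (a c : ℂ) :
    deriv (fun t : ℝ => c * Complex.exp (a * t)) = fun t : ℝ => a * c * Complex.exp (a * t) := by
  funext t
  have h : HasDerivAt (fun s : ℂ => c * Complex.exp (a * s)) (a * c * Complex.exp (a * t)) t :=
    (((hasDerivAt_id' (t : ℂ)).const_mul a).cexp.const_mul c).congr_deriv (by ring)
  exact h.comp_ofReal.deriv

theorem rotating_motion_eq_iff {R : ℝ} {c u F : ℂ} (hc : ‖c‖ < R) (hu : ‖u‖ = 1) :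
    -I / 2 * (-I / 2 * c) * u
        = -2 * conj (c * u) * (-I / 2 * c * u) ^ 2 / ((R : ℂ) ^ 2 - (((‖c‖) ^ 2 : ℝ) : ℂ))
          + (((R ^ 2 - (‖c‖) ^ 2) ^ 2 / R ^ 4 : ℝ) : ℂ)
            * ((R : ℂ) * ((R : ℂ) ^ 2 - (((‖c‖) ^ 2 : ℝ) : ℂ)) * (u * F))
      ↔ (R : ℂ) ^ 3 * (((R ^ 2 + (‖c‖) ^ 2 : ℝ)) : ℂ) * c
          / (((4 * (R ^ 2 - (‖c‖) ^ 2) ^ 4 : ℝ)) : ℂ) = -F := by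
  have hR : (R : ℂ) ≠ 0 := by exact_mod_cast ((norm_nonneg c).trans_lt hc).ne'
  have hd : ((R ^ 2 - ‖c‖ ^ 2 : ℝ) : ℂ) ≠ 0 := by
    have := norm_nonneg c
    exact_mod_cast (show 0 < R ^ 2 - ‖c‖ ^ 2 by nlinarith).ne'
  have hu0 : u ≠ 0 := by rintro rfl; simp at hu
  push_cast at hd ⊢
  have key : -I / 2 * (-I / 2 * c) * u
        - (-2 * conj (c * u) * (-I / 2 * c * u) ^ 2 / ((R : ℂ) ^ 2 - ‖c‖ ^ 2)
          + ((R : ℂ) ^ 2 - ‖c‖ ^ 2) ^ 2 / R ^ 4 * (R * ((R : ℂ) ^ 2 - ‖c‖ ^ 2) * (u * F)))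
      = -(u * ((R : ℂ) ^ 2 - ‖c‖ ^ 2) ^ 3 / R ^ 3)
          * (R ^ 3 * (R ^ 2 + ‖c‖ ^ 2) * c / (4 * ((R : ℂ) ^ 2 - ‖c‖ ^ 2) ^ 4) - -F) := by
    rw [map_mul]
    field_simp
    linear_combination
      (4 * c * R ^ 5 - 4 * c * R ^ 3 * ‖c‖ ^ 2 + 8 * c ^ 2 * R ^ 3 * u * conj c * conj u) * I_sq
        - 8 * c * R ^ 3 * (conj c * c) * conj_mul_self_of_norm_eq_one hu
        - 8 * c * R ^ 3 * Complex.conj_mul' c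
  have hfactor : -(u * ((R : ℂ) ^ 2 - ‖c‖ ^ 2) ^ 3 / R ^ 3) ≠ 0 := by
    simp [hu0, hd, hR]
  rw [← sub_eq_zero, key, mul_eq_zero, or_iff_right hfactor, sub_eq_zero]

theorem isDiskSolution_rotating_iff_ellipticRelEq_general (R : ℝ)
    (n : ℕ) (m : Fin n → ℝ)
    (c : Fin n → ℂ) (hc : ∀ k, ‖(c k)‖ < R) :
    IsDiskSolution R m (fun k t => c k * Complex.exp (-Complex.I * (t : ℂ) / 2)) ↔
      EllipticRelEq R m c := by
  have hω (t : ℝ) : -I * (t : ℂ) / 2 = -I / 2 * t := by ring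
  have hu (t : ℝ) : ‖Complex.exp (-I / 2 * t)‖ = 1 := by simp [Complex.norm_exp]
  simp only [hω]
  rw [isDiskSolution_iff_diskForce, ellipticRelEq_iff_diskForce]
  refine forall_congr' fun k => ?_
  simp only [deriv_const_mul_cexp, norm_mul, hu, mul_one, diskForce_mul_unit (hu _),
    rotating_motion_eq_iff (hc k) (hu _), forall_const]

/-- The uniformly rotating curves `t ↦ c_k e^{-it/2}` form a solution of the curved
`n`-body problem in the Poincaré disk if and only if the points `c_1, …, c_n`
satisfy the elliptic relative-equilibrium equations. -/
theorem isDiskSolution_rotating_iff_ellipticRelEq (R : ℝ) (hR : 0 < R)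
    (n : ℕ) (hn : 2 ≤ n) (m : Fin n → ℝ) (hm : ∀ k, 0 < m k)
    (c : Fin n → ℂ) (hc : ∀ k, ‖(c k)‖ < R)
    (hdist : ∀ k j, k ≠ j → c k ≠ c j) :
    IsDiskSolution R m (fun k t => c k * Complex.exp (-Complex.I * (t : ℂ) / 2)) ↔
      EllipticRelEq R m c :=
  isDiskSolution_rotating_iff_ellipticRelEq_general R n m c hc
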